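/- arXiv:1709.01663 — 10 statements merged into one kernel-verified Lean document; each statement's English description precedes it below -/
import Mathlib

section
/- Let k be a field, V a k-vector space, and V₁,…,V_N subspaces of V. Then there exist subspaces W₁,…,W_N of V such that V_j ⊆ W_j for every 1 ≤ j ≤ N, (W₁ ∩ ⋯ ∩ Wₙ) + W_{n+1} = V for every 1 ≤ n < N, and ⋂_{j=1}^N V_j = ⋂_{j=1}^N W_j. -/
/-- **Enlarging subspaces to a mutually transverse family.** Given subspaces
`V₁,…,V_N` of a `k`-vector space `V`, there exist subspaces `W₁,…,W_N` with
`V_j ⊆ W_j` for all `j`, `(W₁ ∩ ⋯ ∩ Wₙ) + W_{n+1} = V` for all `1 ≤ n < N`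
(here indexed so that `W m` for `m : Fin N` with `0 < m` plays the role of
`W_{n+1}` and the infimum is over the earlier indices), and
`⋂_j V_j = ⋂_j W_j`. -/
theorem enlarge_subspaces_transverse {k V : Type*} [Field k] [AddCommGroup V]
    [Module k V] (N : ℕ) (Vs : Fin N → Submodule k V) :
    ∃ Ws : Fin N → Submodule k V,
      (∀ j, Vs j ≤ Ws j) ∧
      (∀ m : Fin N, 0 < m.val →
        (⨅ (j : Fin N) (_ : j < m), Ws j) ⊔ Ws m = ⊤) ∧
      (⨅ j, Vs j) = ⨅ j, Ws j := by
  classical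
  set P : Fin N → Submodule k V := fun m => ⨅ (j : Fin N) (_ : j < m), Vs j with hP
  choose D hD using fun m : Fin N => Submodule.exists_isCompl ((P m) ⊔ Vs m)
  -- key intersection property
  have key : ∀ m : Fin N, P m ⊓ (Vs m ⊔ D m) ≤ Vs m := by
    intro m x hx
    obtain ⟨hx1, hx2⟩ := hx
    obtain ⟨v, hv, d, hd, hvd⟩ := Submodule.mem_sup.mp hx2
    have hdQ : d ∈ (P m ⊔ Vs m) ⊓ D m := by
      refine ⟨?_, hd⟩
      have hxQ : x ∈ P m ⊔ Vs m := Submodule.mem_sup_left hx1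
      have hvQ : v ∈ P m ⊔ Vs m := Submodule.mem_sup_right hv
      have : d = x - v := by rw [← hvd]; abel
      rw [this]
      exact Submodule.sub_mem _ hxQ hvQ
    have hd0 : d = 0 := by
      have := (hD m).inf_eq_bot
      rw [this] at hdQ
      simpa using hdQ
    rw [← hvd, hd0, add_zero]
    exact hv
  refine ⟨fun m => Vs m ⊔ D m, fun j => le_sup_left, ?_, ?_⟩
  · intro m hm
    have h1 : P m ≤ ⨅ (j : Fin N) (_ : j < m), Vs j ⊔ D j := by
      simp only [le_iInf_iff]
      intro j hj
      exact le_trans (iInf_le_of_le j (iInf_le _ hj)) le_sup_left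
    have h2 : (P m ⊔ Vs m) ⊔ D m = ⊤ := (hD m).sup_eq_top
    rw [eq_top_iff, ← h2, sup_assoc]
    exact sup_le_sup h1 le_rfl
  · refine le_antisymm (le_iInf fun m => le_trans (iInf_le _ m) le_sup_left) ?_
    have main : ∀ n : ℕ, ∀ m : Fin N, m.val = n → (⨅ j, Vs j ⊔ D j) ≤ Vs m := by
      intro n
      induction n using Nat.strong_induction_on with
      | _ n ih =>
        intro m hm
        have hPm : (⨅ j, Vs j ⊔ D j) ≤ P m := by
          simp only [hP, le_iInf_iff]
          intro j hj
          exact ih j.val (hm ▸ hj) j rfl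
        exact le_trans (le_inf hPm (iInf_le _ m)) (key m)
    exact le_iInf fun m => main m.val m rfl
end

section
/- Let k be a field, V a k-vector space, and W₁,…,W_N subspaces of V. Then (W₁ ∩ ⋯ ∩ Wₙ) + W_{n+1} = V for every 1 ≤ n < N if and only if there exist a basis E of V and pairwise disjoint subsets E₁,…,E_N ⊆ E such that W_j = span(E \ E_j) for every 1 ≤ j ≤ N. -/
/-!
The transversality conditions say, Chinese-remainder style, that `V → ∏ⱼ V ⧸ Wⱼ` is surjective:
a vector with prescribed classes modulo `W₁, …, Wₙ` is corrected modulo `W_{n+1}` by adding an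
element of `W₁ ∩ ⋯ ∩ Wₙ`. A surjection onto a product splits, `V ≃ (∏ⱼ V ⧸ Wⱼ) × ker`, and in a
basis adapted to this splitting `Wⱼ`, the kernel of the `j`-th factor, is spanned by all basis
vectors except those `Eⱼ` of the `j`-th factor. Conversely, vectors of `Eⱼ` lie in every `Wᵢ`,
`i ≠ j`, and all other basis vectors lie in `Wⱼ`.
-/

open Module Submodule Set

namespace Module.Basis

variable {ι R M : Type*} [Semiring R] [AddCommMonoid M] [Module R M]

theorem mem_span_image_compl_iff (b : Basis ι R M) {s : Set ι} {m : M} :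
    m ∈ span R (b '' sᶜ) ↔ ∀ i ∈ s, b.repr m i = 0 := by
  rw [b.mem_span_image]
  exact ⟨fun h i hi => Finsupp.notMem_support_iff.1 fun hm => h hm hi,
    fun h i hm hi => Finsupp.mem_support_iff.1 hm (h i hi)⟩

end Module.Basis

section

variable {R M : Type*} [Ring R] [AddCommGroup M] [Module R M] {N : ℕ}

theorem exists_forall_val_lt_mk_eq (Ws : Fin N → Submodule R M)
    (h : ∀ m : Fin N, (⨅ (j : Fin N) (_ : j < m), Ws j) ⊔ Ws m = ⊤)
    (y : ∀ j, M ⧸ Ws j) (t : ℕ) :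
    ∃ v : M, ∀ j : Fin N, (j : ℕ) < t → Submodule.Quotient.mk v = y j := by
  induction t with
  | zero => exact ⟨0, fun j hj => absurd hj (Nat.not_lt_zero _)⟩
  | succ t ih =>
    obtain ⟨v, hv⟩ := ih
    by_cases ht : t < N
    swap
    · exact ⟨v, fun j _ => hv j (lt_of_lt_of_le j.isLt (not_lt.1 ht))⟩
    let m : Fin N := ⟨t, ht⟩
    obtain ⟨x, hx⟩ := Submodule.Quotient.mk_surjective _ (y m)
    obtain ⟨a, ha, w, hw, haw⟩ := mem_sup.1 ((h m).ge (mem_top (x := x - v)))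
    refine ⟨v + a, fun j hj => ?_⟩
    rcases (Nat.lt_succ_iff_lt_or_eq.1 hj) with hj | hj
    · have haj : a ∈ Ws j := (mem_iInf _).1 ((mem_iInf _).1 ha j) hj
      rw [Quotient.mk_add, hv j hj, (Quotient.mk_eq_zero _).2 haj, add_zero]
    · obtain rfl : j = m := Fin.ext hj
      rw [← hx, Submodule.Quotient.eq]
      have : v + a - x = -w := by linear_combination (norm := module) haw
      exact this ▸ neg_mem hw

theorem surjective_pi_mkQ_of_iInf_lt_sup_eq_top (Ws : Fin N → Submodule R M)
    (h : ∀ m : Fin N, (⨅ (j : Fin N) (_ : j < m), Ws j) ⊔ Ws m = ⊤) :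
    Function.Surjective (LinearMap.pi fun j => (Ws j).mkQ) := fun y =>
  (exists_forall_val_lt_mk_eq Ws h y N).imp fun _ hv => funext fun j => hv j j.isLt

end

section

variable {k V ι : Type*} [Field k] [AddCommGroup V] [Module k V] [Fintype ι]
  {Q : ι → Type*} [∀ i, AddCommGroup (Q i)] [∀ i, Module k (Q i)]

theorem exists_basis_ker_proj_comp_eq_span_sdiff (φ : V →ₗ[k] ∀ i, Q i)
    (hφ : Function.Surjective φ) :
    ∃ (E : Set V) (Es : ι → Set V), LinearIndependent k ((↑) : E → V) ∧ span k E = ⊤ ∧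
      (∀ i, Es i ⊆ E) ∧ Pairwise (Function.onFun Disjoint Es) ∧
      ∀ i, LinearMap.ker (LinearMap.proj i ∘ₗ φ) = span k (E \ Es i) := by
  obtain ⟨C, hC⟩ := (LinearMap.ker φ).exists_isCompl
  let e : V ≃ₗ[k] (∀ i, Q i) × LinearMap.ker φ :=
    φ.equivProdOfSurjectiveOfIsCompl (projectionOnto _ C hC) (LinearMap.range_eq_top.2 hφ)
      (range_projectionOnto hC) (by rw [ker_projectionOnto]; exact hC)
  let bQ i := Basis.ofVectorSpace k (Q i)
  let b := ((Pi.basis bQ).prod (Basis.ofVectorSpace k (LinearMap.ker φ))).map e.symm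
  refine ⟨range b, fun i => b '' (Sum.inl '' (Sigma.fst ⁻¹' {i})),
    (linearIndepOn_id_range_iff b.injective).2 b.linearIndependent, b.span_eq,
    fun i => image_subset_range _ _, fun i j hij => ?_, fun i => ?_⟩
  · simp only [Function.onFun, disjoint_image_iff b.injective,
      disjoint_image_iff Sum.inl_injective]
    exact (disjoint_singleton.2 hij).preimage _
  · ext v
    rw [range_sdiff_image b.injective, b.mem_span_image_compl_iff, LinearMap.mem_ker,
      LinearMap.comp_apply, LinearMap.proj_apply, ← (bQ i).forall_coord_eq_zero_iff,
      forall_mem_image]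
    -- `b.repr v (Sum.inl ⟨i, a⟩)` is definitionally `(bQ i).repr (φ v i) a`.
    exact ⟨fun h ⟨_, a⟩ hj => by cases hj; exact h a, fun h a => h (x := ⟨i, a⟩) rfl⟩

end

theorem iInf_ne_sup_eq_top_of_forall_eq_span_sdiff {R M ι : Type*} [Semiring R]
    [AddCommMonoid M] [Module R M] {E : Set M} {Es : ι → Set M} {Ws : ι → Submodule R M}
    (hspan : span R E = ⊤) (hdisj : Pairwise (Function.onFun Disjoint Es))
    (hW : ∀ j, Ws j = span R (E \ Es j)) (m : ι) :
    (⨅ (j : ι) (_ : j ≠ m), Ws j) ⊔ Ws m = ⊤ := by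
  rw [eq_top_iff, ← hspan, span_le]
  intro x hx
  by_cases hxm : x ∈ Es m
  · refine mem_sup_left ((mem_iInf _).2 fun j => (mem_iInf _).2 fun hj => ?_)
    rw [hW j]
    exact subset_span ⟨hx, fun hxj => disjoint_left.1 (hdisj hj) hxj hxm⟩
  · rw [hW m]
    exact mem_sup_right (subset_span ⟨hx, hxm⟩)

/-- **Mutual transversality ↔ coming from disjoint coordinate sets.** Subspaces
`W₁,…,W_N` of a `k`-vector space `V` satisfy `(W₁ ∩ ⋯ ∩ Wₙ) + W_{n+1} = V` for
all `1 ≤ n < N` if and only if there exist a basis `E` of `V` and pairwise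
disjoint subsets `E₁,…,E_N ⊆ E` with `W_j = span(E \ E_j)` for every `j`. -/
theorem transverse_iff_basis {k V : Type*} [Field k] [AddCommGroup V]
    [Module k V] (N : ℕ) (Ws : Fin N → Submodule k V) :
    (∀ m : Fin N, 0 < m.val →
        (⨅ (j : Fin N) (_ : j < m), Ws j) ⊔ Ws m = ⊤) ↔
      ∃ (E : Set V) (Es : Fin N → Set V),
        LinearIndependent k ((↑) : E → V) ∧
        Submodule.span k E = ⊤ ∧
        (∀ j, Es j ⊆ E) ∧
        Pairwise (Function.onFun Disjoint Es) ∧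
        ∀ j, Ws j = Submodule.span k (E \ Es j) := by
  constructor
  · intro h
    have h' : ∀ m : Fin N, (⨅ (j : Fin N) (_ : j < m), Ws j) ⊔ Ws m = ⊤ := fun m =>
      (Nat.eq_zero_or_pos m).elim (fun hm => by simp [Fin.lt_def, hm]) (h m)
    obtain ⟨E, Es, hli, hspan, hsub, hdisj, hker⟩ :=
      exists_basis_ker_proj_comp_eq_span_sdiff _ (surjective_pi_mkQ_of_iInf_lt_sup_eq_top Ws h')
    refine ⟨E, Es, hli, hspan, hsub, hdisj, fun j => ?_⟩
    rw [← hker j]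
    ext
    simp
  · rintro ⟨E, Es, -, hspan, -, hdisj, hW⟩ m -
    exact eq_top_mono (sup_le_sup_right (biInf_mono fun j hj => hj.ne) _)
      (iInf_ne_sup_eq_top_of_forall_eq_span_sdiff hspan hdisj hW m)
end

section
/- Let k be a field, V a k-vector space, and W₁,…,W_N subspaces of V. Then (W₁ ∩ ⋯ ∩ Wₙ) + W_{n+1} = V for every 1 ≤ n < N if and only if the family of annihilators W₁^⊥,…,W_N^⊥ in the dual space V* is linearly independent, i.e. W_j^⊥ ∩ (Σ_{i≠j} W_i^⊥) = 0 for every 1 ≤ j ≤ N. -/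
open Submodule

/-- Key lemma: if a finite family of submodules satisfies the "chain" disjointness
condition, then any finitely supported family of elements of the submodules summing
to zero is zero. -/
lemma chain_sum_eq_zero {k M : Type*} [Field k] [AddCommGroup M] [Module k M]
    {N : ℕ} (A : Fin N → Submodule k M)
    (H : ∀ m : Fin N, A m ⊓ (⨆ (j : Fin N) (_ : j < m), A j) = ⊥)
    (f : Fin N →₀ M) (hf : ∀ i, f i ∈ A i) (hsum : (f.sum fun _ v => v) = 0) :
    f = 0 := by
  by_contra hne
  have hsupp : f.support.Nonempty := Finsupp.support_nonempty_iff.mpr hne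
  obtain ⟨m, hm, hmax⟩ := f.support.exists_max_image id hsupp
  have hlt : ∀ i ∈ f.support.erase m, i < m := by
    intro i hi
    rcases Finset.mem_erase.mp hi with ⟨hne', hi'⟩
    exact lt_of_le_of_ne (hmax i hi') hne'
  have hrest : ∑ i ∈ f.support.erase m, f i ∈ ⨆ (j : Fin N) (_ : j < m), A j := by
    refine Submodule.sum_mem _ fun i hi => ?_
    exact Submodule.mem_iSup_of_mem i (Submodule.mem_iSup_of_mem (hlt i hi) (hf i))
  have hfm : f m = -∑ i ∈ f.support.erase m, f i := by
    have := Finset.add_sum_erase _ f hm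
    rw [Finsupp.sum] at hsum
    linear_combination (norm := abel) hsum - this.symm
  have : f m ∈ A m ⊓ (⨆ (j : Fin N) (_ : j < m), A j) :=
    ⟨hf m, by rw [hfm]; exact neg_mem hrest⟩
  rw [H m] at this
  exact Finsupp.mem_support_iff.mp hm (by simpa using this)

lemma chain_iff_indep {k M : Type*} [Field k] [AddCommGroup M] [Module k M]
    {N : ℕ} (A : Fin N → Submodule k M) :
    (∀ m : Fin N, A m ⊓ (⨆ (j : Fin N) (_ : j < m), A j) = ⊥) ↔
      (∀ j : Fin N, A j ⊓ (⨆ (i : Fin N) (_ : i ≠ j), A i) = ⊥) := by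
  constructor
  · intro H j
    rw [eq_bot_iff]
    intro x hx
    obtain ⟨hxj, hxs⟩ := Submodule.mem_inf.mp hx
    rw [Submodule.mem_iSup_iff_exists_finsupp] at hxs
    obtain ⟨f, hf, hsum⟩ := hxs
    have hfj : f j = 0 := by
      have := hf j
      simp only [ne_eq, not_true_eq_false, iSup_false] at this
      simpa using this
    have hfi : ∀ i, f i ∈ A i := by
      intro i
      rcases eq_or_ne i j with rfl | hij
      · rw [hfj]; exact zero_mem _
      · have := hf i
        simpa [hij] using this
    set g : Fin N →₀ M := Finsupp.single j (-x) + f with hg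
    have hgmem : ∀ i, g i ∈ A i := by
      intro i
      rcases eq_or_ne i j with rfl | hij
      · simpa [hg, hfj] using neg_mem hxj
      · simpa [hg, Finsupp.single_apply, hij.symm] using hfi i
    have hgsum : (g.sum fun _ v => v) = 0 := by
      rw [hg, Finsupp.sum_add_index' (fun _ => rfl) (fun _ _ _ => rfl)]
      rw [Finsupp.sum_single_index rfl, hsum]
      abel
    have := chain_sum_eq_zero A H g hgmem hgsum
    have hgj : g j = -x := by simp [hg, hfj]
    rw [this] at hgj
    simpa using hgj.symm
  · intro H m
    rw [eq_bot_iff, ← H m]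
    refine inf_le_inf_left _ (iSup_mono fun i => ?_)
    exact iSup_mono' fun hi => ⟨ne_of_lt hi, le_rfl⟩

/-- **Mutual transversality ↔ linear independence of annihilators.** Subspaces
`W₁,…,W_N` of a `k`-vector space `V` satisfy `(W₁ ∩ ⋯ ∩ Wₙ) + W_{n+1} = V` for
all `1 ≤ n < N` if and only if the annihilators `W₁^⊥,…,W_N^⊥` in the dual
space `V*` form a linearly independent family of subspaces, i.e.
`W_j^⊥ ∩ (Σ_{i≠j} W_i^⊥) = 0` for every `j`. -/
theorem transverse_iff_annihilators_independent {k V : Type*} [Field k]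
    [AddCommGroup V] [Module k V] (N : ℕ) (Ws : Fin N → Submodule k V) :
    (∀ m : Fin N, 0 < m.val →
        (⨅ (j : Fin N) (_ : j < m), Ws j) ⊔ Ws m = ⊤) ↔
      ∀ j : Fin N,
        (Ws j).dualAnnihilator ⊓
          (⨆ (i : Fin N) (_ : i ≠ j), (Ws i).dualAnnihilator) = ⊥ := by
  have hinj : Function.Injective
      (Submodule.dualAnnihilator : Submodule k V → Submodule k (Module.Dual k V)) :=
    Function.LeftInverse.injective fun W =>
      Subspace.dualAnnihilator_dualCoannihilator_eq
  have htop : ∀ U : Submodule k V, U = ⊤ ↔ U.dualAnnihilator = ⊥ := by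
    intro U
    constructor
    · rintro rfl; exact Submodule.dualAnnihilator_top
    · intro h; exact hinj (by rw [h, Submodule.dualAnnihilator_top])
  have hann : ∀ m : Fin N,
      ((⨅ (j : Fin N) (_ : j < m), Ws j) ⊔ Ws m).dualAnnihilator =
        (Ws m).dualAnnihilator ⊓ (⨆ (j : Fin N) (_ : j < m), (Ws j).dualAnnihilator) := by
    intro m
    rw [Submodule.dualAnnihilator_sup_eq, inf_comm]
    congr 1
    rw [iInf_subtype', Subspace.dualAnnihilator_iInf_eq, iSup_subtype']
  have key : (∀ m : Fin N, 0 < m.val →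
        (⨅ (j : Fin N) (_ : j < m), Ws j) ⊔ Ws m = ⊤) ↔
      ∀ m : Fin N, (Ws m).dualAnnihilator ⊓
        (⨆ (j : Fin N) (_ : j < m), (Ws j).dualAnnihilator) = ⊥ := by
    constructor
    · intro h m
      rcases Nat.eq_zero_or_pos m.val with hm | hm
      · have : ∀ j : Fin N, ¬ j < m := fun j hj =>
          Nat.not_lt_zero j.val (hm ▸ hj)
        simp [this]
      · rw [← hann m, ← htop]
        exact h m hm
    · intro h m _
      rw [htop, hann m]
      exact h m
  rw [key]
  exact chain_iff_indep fun i => (Ws i).dualAnnihilator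
end

section
/- Fix an integer n ≥ 2 and define the functions θ⁽ⁱ⁾ as in the context. Then for every integer r ≥ 1: the sequence (θ⁽ⁱ⁾(r))_{i∈ℕ} is nondecreasing in i, satisfies θ⁽ⁱ⁾(r) ≤ ⌊(r−1)/2⌋ for all i, and equals ⌊(r−1)/2⌋ for all i ≥ r−1; in particular sup_{i∈ℕ} θ⁽ⁱ⁾(r) = ⌊(r−1)/2⌋ = ⌈r/2⌉ − 1. -/
/-- **Iterated improvement converges to `⌊(r−1)/2⌋`.** Fix `n ≥ 2` and let
`θ⁽ⁱ⁾ : ℕ → ℤ` be defined recursively by `θ⁽⁰⁾(r) = 0` and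
`θ⁽ⁱ⁺¹⁾(r) = max_{s∈ℕ} min{(n−1)s, ⌈r/2⌉ − s + θ⁽ⁱ⁾(2s), r − s}` (the maximum
exists, which is expressed via `IsGreatest`).  Then for every `r ≥ 1` the
sequence `i ↦ θ⁽ⁱ⁾(r)` is nondecreasing, bounded above by `⌊(r−1)/2⌋`, equal to
`⌊(r−1)/2⌋` for all `i ≥ r−1`; in particular its supremum is
`⌊(r−1)/2⌋ = ⌈r/2⌉ − 1`. -/
theorem iterated_improvement_limit (n : ℕ) (hn : 2 ≤ n) (θ : ℕ → ℕ → ℤ)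
    (h0 : ∀ r, θ 0 r = 0)
    (hrec : ∀ i r, IsGreatest
      {z : ℤ | ∃ s : ℕ, z =
        min (((n : ℤ) - 1) * (s : ℤ))
          (min ((((r + 1) / 2 : ℕ) : ℤ) - (s : ℤ) + θ i (2 * s))
            ((r : ℤ) - (s : ℤ)))}
      (θ (i + 1) r))
    (r : ℕ) (hr : 1 ≤ r) :
    (Monotone fun i => θ i r) ∧
    (∀ i, θ i r ≤ (((r - 1) / 2 : ℕ) : ℤ)) ∧
    (∀ i, r - 1 ≤ i → θ i r = (((r - 1) / 2 : ℕ) : ℤ)) ∧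
    IsLUB (Set.range fun i => θ i r) (((r - 1) / 2 : ℕ) : ℤ) ∧
    (((r - 1) / 2 : ℕ) : ℤ) = (((r + 1) / 2 : ℕ) : ℤ) - 1 := by
  -- upper bound, valid for all r (note for r = 0 the RHS is 0)
  have ub : ∀ i r, θ i r ≤ (((r - 1) / 2 : ℕ) : ℤ) := by
    intro i
    induction i with
    | zero => intro r; rw [h0]; positivity
    | succ i ih =>
      intro r
      obtain ⟨s, hs⟩ := (hrec i r).1
      rcases Nat.eq_zero_or_pos s with h | h
      · subst h
        have h1 : θ (i+1) r ≤ ((n:ℤ)-1) * ((0:ℕ):ℤ) := hs ▸ min_le_left _ _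
        have : ((n:ℤ)-1) * ((0:ℕ):ℤ) = 0 := by simp
        omega
      · have h1 : θ (i+1) r ≤ (((r + 1) / 2 : ℕ) : ℤ) - (s : ℤ) + θ i (2 * s) :=
          hs ▸ le_trans (min_le_right _ _) (min_le_left _ _)
        have h2 := ih (2 * s)
        have h3 : (((2 * s - 1) / 2 : ℕ) : ℤ) = (s : ℤ) - 1 := by omega
        have h4 : (((r + 1) / 2 : ℕ) : ℤ) - 1 ≤ (((r - 1) / 2 : ℕ) : ℤ) := by omega
        omega
  -- monotonicity step, for all r
  have mono1 : ∀ i r, θ i r ≤ θ (i + 1) r := by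
    intro i
    induction i with
    | zero =>
      intro r
      show θ 0 r ≤ θ 1 r
      have hmem : min (((n : ℤ) - 1) * ((0:ℕ) : ℤ))
          (min ((((r + 1) / 2 : ℕ) : ℤ) - ((0:ℕ) : ℤ) + θ 0 (2 * 0))
            ((r : ℤ) - ((0:ℕ) : ℤ))) ≤ θ 1 r := (hrec 0 r).2 ⟨0, rfl⟩
      rw [h0] at hmem
      have : (0:ℤ) ≤ min (((n : ℤ) - 1) * ((0:ℕ) : ℤ))
          (min ((((r + 1) / 2 : ℕ) : ℤ) - ((0:ℕ) : ℤ) + 0)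
            ((r : ℤ) - ((0:ℕ) : ℤ))) := by
        apply le_min
        · simp
        · apply le_min
          · simp only [Nat.cast_zero, sub_zero, add_zero]
            positivity
          · simp only [Nat.cast_zero, sub_zero]
            positivity
      rw [h0]
      omega
    | succ i ih =>
      intro r
      obtain ⟨s, hs⟩ := (hrec i r).1
      have hmem : min (((n : ℤ) - 1) * (s : ℤ))
          (min ((((r + 1) / 2 : ℕ) : ℤ) - (s : ℤ) + θ (i+1) (2 * s))
            ((r : ℤ) - (s : ℤ))) ≤ θ (i + 2) r := (hrec (i+1) r).2 ⟨s, rfl⟩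
      have hih := ih (2 * s)
      rw [hs]
      refine le_trans ?_ hmem
      apply le_min
      · exact min_le_left _ _
      · apply le_min
        · refine le_trans (le_trans (min_le_right _ _) (min_le_left _ _)) ?_
          omega
        · exact le_trans (min_le_right _ _) (min_le_right _ _)
  have mono : Monotone fun i => θ i r := monotone_nat_of_le_succ fun i => mono1 i r
  have lb0 : ∀ i r, (0:ℤ) ≤ θ i r := by
    intro i r
    have : θ 0 r ≤ θ i r :=
      (monotone_nat_of_le_succ fun i => mono1 i r) (Nat.zero_le i)
    rw [h0] at this; exact this
  -- equality for i ≥ r - 1, by strong induction on r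
  have eqth : ∀ r, 1 ≤ r → ∀ i, r - 1 ≤ i → θ i r = (((r - 1) / 2 : ℕ) : ℤ) := by
    intro r
    induction r using Nat.strong_induction_on with
    | _ r ihr =>
      intro hr1 i hi
      rcases le_or_gt r 2 with h2 | h2
      · have : (((r - 1) / 2 : ℕ) : ℤ) = 0 := by omega
        have := lb0 i r
        have := ub i r
        omega
      · -- r ≥ 3; i ≥ r - 1 ≥ 2, write i = j + 1
        obtain ⟨j, rfl⟩ : ∃ j, i = j + 1 := ⟨i - 1, by omega⟩
        set s : ℕ := (r + 1) / 2 - 1 with hs_def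
        have hs1 : 1 ≤ s := by omega
        have hs2 : 2 * s < r := by omega
        have hs3 : 2 * s - 1 ≤ j := by omega
        have hIH : θ j (2 * s) = (((2 * s - 1) / 2 : ℕ) : ℤ) :=
          ihr (2 * s) hs2 (by omega) j hs3
        have hval : (((2 * s - 1) / 2 : ℕ) : ℤ) = (s : ℤ) - 1 := by omega
        have hmem : min (((n : ℤ) - 1) * (s : ℤ))
            (min ((((r + 1) / 2 : ℕ) : ℤ) - (s : ℤ) + θ j (2 * s))
              ((r : ℤ) - (s : ℤ))) ≤ θ (j + 1) r := (hrec j r).2 ⟨s, rfl⟩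
        have hn' : (s : ℤ) ≤ ((n : ℤ) - 1) * (s : ℤ) := by
          nlinarith [Int.natCast_nonneg s, (by exact_mod_cast hn : (2:ℤ) ≤ n)]
        have hkey : (((r - 1) / 2 : ℕ) : ℤ) ≤ min (((n : ℤ) - 1) * (s : ℤ))
            (min ((((r + 1) / 2 : ℕ) : ℤ) - (s : ℤ) + θ j (2 * s))
              ((r : ℤ) - (s : ℤ))) := by
          rw [hIH]
          apply le_min
          · omega
          · apply le_min <;> omega
        have := ub (j + 1) r
        omega
  refine ⟨mono, fun i => ub i r, eqth r hr, ?_, by omega⟩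
  constructor
  · rintro x ⟨i, rfl⟩; exact ub i r
  · intro b hb
    have hmem : θ (r - 1) r ∈ Set.range fun i => θ i r := ⟨r - 1, rfl⟩
    have := hb hmem
    rw [eqth r hr (r - 1) le_rfl] at this
    exact this
end

section
/- Fix an integer n ≥ 2 and define the functions θ⁽ⁱ⁾ as in the context. Then θ⁽ⁱ⁾(r) ≤ ⌈r/2⌉ − 1 for every i ∈ ℕ and every integer r ≥ 1. -/
/-- **Upper bound for the iterated improvement.** Fix `n ≥ 2` and let
`θ⁽ⁱ⁾ : ℕ → ℤ` be defined recursively by `θ⁽⁰⁾(r) = 0` and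
`θ⁽ⁱ⁺¹⁾(r) = max_{s∈ℕ} min{(n−1)s, ⌈r/2⌉ − s + θ⁽ⁱ⁾(2s), r − s}` (the maximum
exists, which is expressed via `IsGreatest`).  Then `θ⁽ⁱ⁾(r) ≤ ⌈r/2⌉ − 1` for
every `i ∈ ℕ` and every `r ≥ 1`. -/
theorem iterated_improvement_upper_bound (n : ℕ) (hn : 2 ≤ n) (θ : ℕ → ℕ → ℤ)
    (h0 : ∀ r, θ 0 r = 0)
    (hrec : ∀ i r, IsGreatest
      {z : ℤ | ∃ s : ℕ, z =
        min (((n : ℤ) - 1) * (s : ℤ))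
          (min ((((r + 1) / 2 : ℕ) : ℤ) - (s : ℤ) + θ i (2 * s))
            ((r : ℤ) - (s : ℤ)))}
      (θ (i + 1) r)) :
    ∀ (i r : ℕ), 1 ≤ r → θ i r ≤ (((r + 1) / 2 : ℕ) : ℤ) - 1 := by
  intro i
  induction i with
  | zero =>
    intro r hr
    rw [h0]
    omega
  | succ i ih =>
    intro r hr
    obtain ⟨⟨s, hz⟩, -⟩ := hrec i r
    rw [hz]
    rcases Nat.eq_zero_or_pos s with hs | hs
    · subst hs
      have h1 : (((n : ℤ) - 1) * ((0:ℕ) : ℤ)) = 0 := by push_cast; ring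
      calc min (((n : ℤ) - 1) * ((0:ℕ) : ℤ)) _ ≤ ((n : ℤ) - 1) * ((0:ℕ) : ℤ) := min_le_left _ _
        _ = 0 := h1
        _ ≤ (((r + 1) / 2 : ℕ) : ℤ) - 1 := by omega
    · have hmid := ih (2 * s) (by omega)
      have h2 : (((2 * s + 1) / 2 : ℕ) : ℤ) = (s : ℤ) := by omega
      calc min (((n : ℤ) - 1) * (s : ℤ))
            (min ((((r + 1) / 2 : ℕ) : ℤ) - (s : ℤ) + θ i (2 * s)) ((r : ℤ) - (s : ℤ)))
          ≤ (((r + 1) / 2 : ℕ) : ℤ) - (s : ℤ) + θ i (2 * s) :=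
            le_trans (min_le_right _ _) (min_le_left _ _)
        _ ≤ (((r + 1) / 2 : ℕ) : ℤ) - 1 := by omega
end

section
/- Take n = 2 and define the functions θ⁽ⁱ⁾ as in the context. Then θ⁽ⁱ⁾(r) ≥ ⌊ (r/2)·(1 − 1/(i+1)) ⌋ for every i ∈ ℕ and every integer r ≥ 1. -/
/-- Key arithmetic inequality. -/
lemma key_nat_ineq (i r s : ℕ) (hs : 2*(i+2)*s ≤ r*(i+1)) :
    2*s ≤ (r+1)/2 + s*i/(i+1) := by
  set a := (r+1)/2 with ha
  set b := s*i/(i+1) with hb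
  have h1 : r ≤ 2*a := by omega
  have h2 : s*i = (i+1)*b + (s*i) % (i+1) := (Nat.div_add_mod _ _).symm
  have h3 : (s*i) % (i+1) ≤ i := by
    have := Nat.mod_lt (s*i) (y := i+1) (by omega); omega
  nlinarith [mul_le_mul_left h1 (i+1), mul_le_mul_left (Nat.le_refl s) i]

/-- **Lower bound for the iterated improvement when `n = 2`.** Let
`θ⁽ⁱ⁾ : ℕ → ℤ` be defined recursively by `θ⁽⁰⁾(r) = 0` and
`θ⁽ⁱ⁺¹⁾(r) = max_{s∈ℕ} min{s, ⌈r/2⌉ − s + θ⁽ⁱ⁾(2s), r − s}` (the `n = 2`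
specialization, the maximum being expressed via `IsGreatest`).  Then
`θ⁽ⁱ⁾(r) ≥ ⌊(r/2)·(1 − 1/(i+1))⌋ = ⌊r·i/(2(i+1))⌋` for every `i ∈ ℕ` and
every `r ≥ 1`. -/
theorem iterated_improvement_lower_bound_n_two (θ : ℕ → ℕ → ℤ)
    (h0 : ∀ r, θ 0 r = 0)
    (hrec : ∀ i r, IsGreatest
      {z : ℤ | ∃ s : ℕ, z =
        min ((s : ℤ))
          (min ((((r + 1) / 2 : ℕ) : ℤ) - (s : ℤ) + θ i (2 * s))
            ((r : ℤ) - (s : ℤ)))}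
      (θ (i + 1) r)) :
    ∀ (i r : ℕ), 1 ≤ r → (((r * i) / (2 * (i + 1)) : ℕ) : ℤ) ≤ θ i r := by
  -- nonnegativity
  have hnn : ∀ i r, (0:ℤ) ≤ θ i r := by
    intro i
    induction i with
    | zero => intro r; rw [h0]
    | succ i ih =>
      intro r
      have hmem : (min ((0:ℕ) : ℤ)
          (min ((((r + 1) / 2 : ℕ) : ℤ) - ((0:ℕ) : ℤ) + θ i (2 * 0))
            ((r : ℤ) - ((0:ℕ) : ℤ))) ) ≤ θ (i+1) r :=
        (hrec i r).2 ⟨0, rfl⟩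
      refine le_trans ?_ hmem
      have h1 : (0:ℤ) ≤ (((r + 1) / 2 : ℕ) : ℤ) - ((0:ℕ) : ℤ) + θ i (2*0) := by
        have := ih (2*0)
        have := Int.natCast_nonneg ((r+1)/2)
        simp only [Nat.cast_zero]
        linarith
      have h2 : (0:ℤ) ≤ (r : ℤ) - ((0:ℕ) : ℤ) := by
        have := Int.natCast_nonneg r
        simp only [Nat.cast_zero]; linarith
      simp only [Nat.cast_zero]
      omega
  intro i
  induction i with
  | zero =>
    intro r _
    simp [h0]
  | succ i ih =>
    intro r hr
    set s : ℕ := r * (i+1) / (2 * (i+2)) with hsdef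
    have hmem : (min ((s : ℤ))
        (min ((((r + 1) / 2 : ℕ) : ℤ) - (s : ℤ) + θ i (2 * s))
          ((r : ℤ) - (s : ℤ))) ) ≤ θ (i+1) r :=
      (hrec i r).2 ⟨s, rfl⟩
    have hsle : 2*(i+2)*s ≤ r*(i+1) := by
      have := Nat.div_mul_le_self (r*(i+1)) (2*(i+2))
      calc 2*(i+2)*s = s * (2*(i+2)) := by ring
        _ ≤ r*(i+1) := this
    have h2s : 2*s ≤ r := by
      have h' : 2*s*(i+2) ≤ r*(i+2) := by nlinarith
      exact Nat.le_of_mul_le_mul_right h' (by omega)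
    refine le_trans ?_ hmem
    have goal1 : ((r*(i+1)/(2*(i+2)) : ℕ) : ℤ) ≤ (s : ℤ) := by rw [hsdef]
    have goal3 : (s : ℤ) ≤ (r : ℤ) - (s : ℤ) := by
      have : ((2*s : ℕ) : ℤ) ≤ (r : ℤ) := by exact_mod_cast h2s
      push_cast at this ⊢; linarith
    have goal2 : (s : ℤ) ≤ (((r + 1) / 2 : ℕ) : ℤ) - (s : ℤ) + θ i (2 * s) := by
      rcases Nat.eq_zero_or_pos s with h | h
      · rw [h]
        have h4 := hnn i (2*0)
        have h5 := Int.natCast_nonneg ((r+1)/2)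
        simp only [Nat.cast_zero, mul_zero] at h4 ⊢
        linarith
      · have hIH : (((2*s) * i / (2 * (i + 1)) : ℕ) : ℤ) ≤ θ i (2*s) := ih (2*s) (by omega)
        have hdiv : (2*s) * i / (2 * (i + 1)) = s * i / (i+1) := by
          rw [mul_assoc, Nat.mul_div_mul_left _ _ (by norm_num : 0 < 2)]
        rw [hdiv] at hIH
        have hkey : 2*s ≤ (r+1)/2 + s*i/(i+1) := key_nat_ineq i r s hsle
        have hk' : 2*(s : ℤ) ≤ (((r+1)/2 : ℕ) : ℤ) + ((s*i/(i+1) : ℕ) : ℤ) := by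
          exact_mod_cast hkey
        linarith
    simp only [le_min_iff]
    exact ⟨goal1, goal2, goal3⟩
end

section
/- Let F ∈ ℤ[x₁,…,xₙ]. There exists a nonzero m ∈ ℚ̄ⁿ (ℚ̄ an algebraic closure of ℚ) such that F(x+m) = F(x) as polynomials with coefficients in ℚ̄ if and only if there exists a nonzero m ∈ ℤⁿ such that F(x+m) = F(x). -/
open MvPolynomial

noncomputable section TransInvAux

namespace TransInvAux

open Matrix

variable {n : ℕ}

/-- The generic translation `xᵢ ↦ xᵢ + t·mᵢ`, with `t` a new (polynomial) variable. -/
def theta {K : Type*} [CommRing K] (m : Fin n → K) :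
    MvPolynomial (Fin n) K →ₐ[K] Polynomial (MvPolynomial (Fin n) K) :=
  MvPolynomial.aeval fun i =>
    Polynomial.C (MvPolynomial.X i) + Polynomial.C (MvPolynomial.C (m i)) * Polynomial.X

variable {K : Type*} [CommRing K]

theorem theta_eval_C (m : Fin n → K) (t : K) (F : MvPolynomial (Fin n) K) :
    Polynomial.eval (MvPolynomial.C t) (theta m F) =
      aeval (fun i => X i + MvPolynomial.C (t * m i)) F := by
  have h : ((Polynomial.evalRingHom (MvPolynomial.C t)).comp (theta m).toRingHom) =
      ((aeval fun i => X i + MvPolynomial.C (t * m i)) :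
        MvPolynomial (Fin n) K →ₐ[K] MvPolynomial (Fin n) K).toRingHom := by
    apply MvPolynomial.ringHom_ext
    · intro r
      simp [theta, Polynomial.algebraMap_apply, algebraMap_eq]
    · intro i
      simp only [RingHom.coe_comp, Function.comp_apply, AlgHom.toRingHom_eq_coe,
        AlgHom.coe_ringHom_mk, AlgHom.coe_mk, AlgHom.coe_toRingHom, theta, aeval_X,
        Polynomial.coe_evalRingHom, Polynomial.eval_add, Polynomial.eval_mul,
        Polynomial.eval_C, Polynomial.eval_X]
      rw [← MvPolynomial.C_mul, mul_comm]
  exact RingHom.congr_fun h F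

theorem coeff_zero_theta (m : Fin n → K) (F : MvPolynomial (Fin n) K) :
    (theta m F).coeff 0 = F := by
  rw [Polynomial.coeff_zero_eq_eval_zero, show (0 : MvPolynomial (Fin n) K) =
    MvPolynomial.C 0 by simp, theta_eval_C]
  simp

theorem theta_injective (m : Fin n → K) : Function.Injective (theta m) := by
  intro F G h
  have := congrArg (fun P => Polynomial.coeff P 0) h
  simpa [coeff_zero_theta] using this

theorem theta_C (m : Fin n → K) (a : K) :
    theta m (MvPolynomial.C a) = Polynomial.C (MvPolynomial.C a) := by
  simp [theta, Polynomial.algebraMap_apply, algebraMap_eq]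

theorem theta_X (m : Fin n → K) (j : Fin n) :
    theta m (X j) = Polynomial.C (MvPolynomial.X j) +
      Polynomial.C (MvPolynomial.C (m j)) * Polynomial.X := by
  simp [theta]

/-- Chain rule: `d/dt F(x + t m) = (∑ mᵢ ∂ᵢF)(x + t m)`. -/
theorem derivative_theta (m : Fin n → K) (F : MvPolynomial (Fin n) K) :
    Polynomial.derivative (theta m F) = theta m (∑ i, m i • pderiv i F) := by
  induction F using MvPolynomial.induction_on with
  | C a =>
      simp only [pderiv_C, smul_zero, Finset.sum_const_zero, map_zero, theta_C,
        Polynomial.derivative_C]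
  | add p q hp hq =>
      simp only [map_add, smul_add, Finset.sum_add_distrib, hp, hq]
  | mul_X p j hp =>
      have hDX : (∑ i, m i • pderiv i (p * X j)) =
          (∑ i, m i • pderiv i p) * X j + MvPolynomial.C (m j) * p := by
        have e1 : ∀ i : Fin n, m i • pderiv i (p * X j) =
            (m i • pderiv i p) * X j + m i • (p * pderiv i (X j)) := by
          intro i
          rw [pderiv_mul, smul_add, smul_mul_assoc]
        rw [Finset.sum_congr rfl fun i _ => e1 i, Finset.sum_add_distrib, ← Finset.sum_mul]
        congr 1
        rw [Finset.sum_eq_single j]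
        · simp [Algebra.smul_def, algebraMap_eq, mul_comm]
        · intro i _ hij
          simp [pderiv_X_of_ne (Ne.symm hij)]
        · simp
      have expand : Polynomial.derivative ((theta m) (p * X j)) =
          Polynomial.derivative ((theta m) p) * (Polynomial.C (MvPolynomial.X j) +
            Polynomial.C (MvPolynomial.C (m j)) * Polynomial.X) + (theta m) p *
            Polynomial.C (MvPolynomial.C (m j)) := by
        rw [_root_.map_mul, theta_X, Polynomial.derivative_mul]
        simp
      rw [expand, hp, hDX, map_add, _root_.map_mul, _root_.map_mul, theta_X, theta_C]
      ring

theorem trans_trans (a b : Fin n → K) (F : MvPolynomial (Fin n) K) :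
    aeval (fun i => X i + MvPolynomial.C (a i))
        (aeval (fun i => X i + MvPolynomial.C (b i)) F) =
      aeval (fun i => X i + MvPolynomial.C (a i + b i)) F := by
  have h := MvPolynomial.comp_aeval (f := fun i => X i + MvPolynomial.C (b i))
    (φ := (aeval fun i => X i + MvPolynomial.C (a i) :
      MvPolynomial (Fin n) K →ₐ[K] MvPolynomial (Fin n) K))
  have h2 := AlgHom.congr_fun h F
  simp only [AlgHom.coe_comp, Function.comp_apply] at h2
  rw [h2]
  have h3 : (fun i => (aeval fun i => X i + MvPolynomial.C (a i)) (X i + MvPolynomial.C (b i)))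
      = fun i => X i + MvPolynomial.C (a i + b i) := by
    funext i
    simp [algebraMap_eq, C_add, add_assoc]
  rw [h3]

/-- Key characterization: over a char-zero field, invariance under translation by `m`
is equivalent to the vanishing of the directional derivative `∑ mᵢ ∂ᵢ F`. -/
theorem key {K : Type*} [Field K] [CharZero K] (m : Fin n → K) (F : MvPolynomial (Fin n) K) :
    (aeval fun i => X i + MvPolynomial.C (m i)) F = F ↔
      (∑ i, m i • pderiv i F) = 0 := by
  constructor
  · intro h
    -- all integer translates fix F
    have hk : ∀ k : ℕ, (aeval fun i => X i + MvPolynomial.C ((k : K) * m i)) F = F := by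
      intro k
      induction k with
      | zero => simp
      | succ k ih =>
          have h3 := trans_trans m (fun i => (k : K) * m i) F
          rw [ih, h] at h3
          have h4 := congrArg
            (fun v : Fin n → K => (aeval fun i => X i + MvPolynomial.C (v i)) F)
            (show (fun i => (((k + 1 : ℕ)) : K) * m i) = fun i => m i + (k : K) * m i from
              funext fun i => by push_cast; ring)
          exact h4.trans h3.symm
    -- hence theta m F = C F
    have hθ : theta m F = Polynomial.C F := by
      have hroots : Set.Infinite {x : MvPolynomial (Fin n) K |
          (theta m F - Polynomial.C F).IsRoot x} := by
        apply Set.infinite_of_injective_forall_mem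
          (f := fun k : ℕ => (MvPolynomial.C (k : K) : MvPolynomial (Fin n) K))
        · intro a b hab
          have := MvPolynomial.C_injective (Fin n) K hab
          exact_mod_cast this
        · intro k
          simp only [Set.mem_setOf_eq, Polynomial.IsRoot.def, Polynomial.eval_sub,
            Polynomial.eval_C, theta_eval_C, hk k, sub_self]
      have h0 := Polynomial.eq_zero_of_infinite_isRoot _ hroots
      exact sub_eq_zero.mp h0
    have hd := derivative_theta m F
    rw [hθ, Polynomial.derivative_C] at hd
    have h5 : theta m (∑ i, m i • pderiv i F) = theta m 0 := by
      rw [map_zero, ← hd]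
    exact theta_injective m h5
  · intro h
    have hd : Polynomial.derivative (theta m F) = 0 := by
      rw [derivative_theta, h, map_zero]
    have hdeg : (theta m F).natDegree = 0 :=
      Polynomial.natDegree_eq_zero_of_derivative_eq_zero hd
    have hθ : theta m F = Polynomial.C F := by
      rw [Polynomial.eq_C_of_natDegree_eq_zero hdeg, coeff_zero_theta]
    have h6 := theta_eval_C m 1 F
    rw [hθ, Polynomial.eval_C] at h6
    simp only [one_mul] at h6
    exact h6.symm

theorem map_trans {R S : Type*} [CommRing R] [CommRing S] {n : ℕ} (f : R →+* S)
    (m : Fin n → R) (F : MvPolynomial (Fin n) R) :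
    MvPolynomial.map f ((aeval fun i => X i + MvPolynomial.C (m i)) F) =
      (aeval fun i => X i + MvPolynomial.C (f (m i))) (MvPolynomial.map f F) := by
  have h : ((MvPolynomial.map f).comp
      (((aeval fun i => X i + MvPolynomial.C (m i)) :
        MvPolynomial (Fin n) R →ₐ[R] MvPolynomial (Fin n) R)).toRingHom)
    = ((((aeval fun i => X i + MvPolynomial.C (f (m i))) :
        MvPolynomial (Fin n) S →ₐ[S] MvPolynomial (Fin n) S)).toRingHom).comp
        (MvPolynomial.map f) := by
    apply MvPolynomial.ringHom_ext <;> intro x <;> simp [algebraMap_eq]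
  exact RingHom.congr_fun h F

theorem matrix_descent {K : Type*} [Field K] [Algebra ℚ K] {n : ℕ} {ι : Type*} [Fintype ι]
    [DecidableEq ι] (A : Matrix ι (Fin n) ℚ) (m : Fin n → K) (hm : m ≠ 0)
    (h : (A.map (algebraMap ℚ K)).mulVec m = 0) :
    ∃ v : Fin n → ℚ, v ≠ 0 ∧ A.mulVec v = 0 := by
  classical
  set f := algebraMap ℚ K
  have hdetK : ((A.map f)ᵀ * A.map f).det = 0 := by
    rw [← Matrix.exists_mulVec_eq_zero_iff]
    exact ⟨m, hm, by rw [← Matrix.mulVec_mulVec, h, Matrix.mulVec_zero]⟩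
  have hdet : (Aᵀ * A).det = 0 := by
    have hmap : ((Aᵀ * A).map f).det = 0 := by
      rw [Matrix.map_mul, Matrix.transpose_map]
      exact hdetK
    rw [← RingHom.mapMatrix_apply, ← RingHom.map_det] at hmap
    exact (map_eq_zero_iff f (algebraMap ℚ K).injective).mp hmap
  obtain ⟨v, hv, hAv⟩ := (Matrix.exists_mulVec_eq_zero_iff).mpr hdet
  refine ⟨v, hv, ?_⟩
  have h2 : (A.mulVec v) ⬝ᵥ (A.mulVec v) = 0 := by
    have h3 : v ⬝ᵥ ((Aᵀ * A).mulVec v) = 0 := by rw [hAv, dotProduct_zero]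
    rwa [← Matrix.mulVec_mulVec, Matrix.dotProduct_mulVec, Matrix.vecMul_transpose] at h3
  exact dotProduct_self_eq_zero.mp h2

theorem combo_zero_iff {K : Type*} [CommRing K] {n : ℕ} (f : ℚ →+* K)
    (g : Fin n → MvPolynomial (Fin n) ℚ) (m : Fin n → K) (S : Finset ((Fin n) →₀ ℕ))
    (hS : ∀ i, (g i).support ⊆ S) (A : Matrix S (Fin n) ℚ)
    (hA : ∀ d i, A d i = MvPolynomial.coeff d.1 (g i)) :
    (∑ i, m i • MvPolynomial.map f (g i)) = 0 ↔ (A.map f).mulVec m = 0 := by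
  classical
  have hco : ∀ d : (Fin n) →₀ ℕ, MvPolynomial.coeff d (∑ i, m i • MvPolynomial.map f (g i)) =
      ∑ i, f (MvPolynomial.coeff d (g i)) * m i := by
    intro d
    rw [MvPolynomial.coeff_sum]
    exact Finset.sum_congr rfl fun i _ => by
      rw [MvPolynomial.coeff_smul, MvPolynomial.coeff_map, smul_eq_mul, mul_comm]
  constructor
  · intro h
    funext d
    have hd := hco d.1
    rw [h, MvPolynomial.coeff_zero] at hd
    simp only [Matrix.mulVec, dotProduct, Matrix.map_apply, Pi.zero_apply, hA]
    exact hd.symm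
  · intro h
    apply MvPolynomial.ext
    intro d
    rw [hco d, MvPolynomial.coeff_zero]
    by_cases hd : d ∈ S
    · have h2 := congrFun h ⟨d, hd⟩
      simpa [Matrix.mulVec, dotProduct, hA] using h2
    · apply Finset.sum_eq_zero
      intro i _
      have h3 : MvPolynomial.coeff d (g i) = 0 := by
        by_contra hne
        exact hd (hS i (MvPolynomial.mem_support_iff.mpr hne))
      rw [h3, map_zero, zero_mul]

/-- Clearing denominators. -/
theorem clear_denominators {n : ℕ} (v : Fin n → ℚ) (hv : v ≠ 0) :
    ∃ z : Fin n → ℤ, z ≠ 0 ∧ ∃ c : ℚ, c ≠ 0 ∧ ∀ i, (z i : ℚ) = c * v i := by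
  classical
  set N : ℕ := ∏ j, (v j).den with hN
  have hNpos : 0 < N := Finset.prod_pos fun j _ => (v j).pos
  refine ⟨fun i => (v i).num * ((N / (v i).den : ℕ) : ℤ), ?_, (N : ℚ), ?_, ?_⟩
  · obtain ⟨i, hi⟩ := Function.ne_iff.mp hv
    have hzi : ((v i).num * ((N / (v i).den : ℕ) : ℤ)) ≠ 0 := by
      apply mul_ne_zero
      · exact Rat.num_ne_zero.mpr hi
      · have hpos := Nat.div_pos (Nat.le_of_dvd hNpos
          (Finset.dvd_prod_of_mem _ (Finset.mem_univ i))) (v i).pos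
        exact_mod_cast hpos.ne'
    exact Function.ne_iff.mpr ⟨i, hzi⟩
  · exact_mod_cast hNpos.ne'
  · intro i
    have hdvd : (v i).den ∣ N := Finset.dvd_prod_of_mem _ (Finset.mem_univ i)
    have hden : ((v i).den : ℚ) ≠ 0 := by exact_mod_cast (v i).den_nz
    have hcast : ((N / (v i).den : ℕ) : ℚ) = (N : ℚ) / ((v i).den : ℚ) :=
      Nat.cast_div hdvd hden
    have h1 : (((v i).num * ((N / (v i).den : ℕ) : ℤ) : ℤ) : ℚ)
        = ((v i).num : ℚ) * ((N / (v i).den : ℕ) : ℚ) := by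
      rw [Int.cast_mul, Int.cast_natCast]
    have h2 : ((v i).num : ℚ) = v i * ((v i).den : ℚ) :=
      (div_eq_iff hden).mp (Rat.num_div_den (v i))
    rw [h1, hcast, mul_div_assoc', div_eq_iff hden, h2]
    ring

end TransInvAux

end TransInvAux

/-- **Translation invariance over `ℚ̄` iff over `ℤ`.** An integer polynomial
`F ∈ ℤ[x₁,…,xₙ]` is invariant under some nontrivial translation with entries in
an algebraic closure of `ℚ` if and only if it is invariant under some nontrivial
integer translation. -/
theorem translation_invariance_Qbar_iff_Int (n : ℕ) (F : MvPolynomial (Fin n) ℤ) :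
    (∃ m : Fin n → AlgebraicClosure ℚ, m ≠ 0 ∧
        (aeval fun i => X i + MvPolynomial.C (m i))
            (MvPolynomial.map (Int.castRingHom (AlgebraicClosure ℚ)) F) =
          MvPolynomial.map (Int.castRingHom (AlgebraicClosure ℚ)) F) ↔
      (∃ m : Fin n → ℤ, m ≠ 0 ∧
        (aeval fun i => X i + MvPolynomial.C (m i)) F = F) := by
  classical
  set K := AlgebraicClosure ℚ with hK
  haveI : CharZero K := charZero_of_injective_algebraMap (algebraMap ℚ K).injective
  constructor
  · rintro ⟨m, hm, hinv⟩
    have hD : (∑ i, m i • pderiv i (MvPolynomial.map (Int.castRingHom K) F)) = 0 :=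
      (TransInvAux.key m _).mp hinv
    set g : Fin n → MvPolynomial (Fin n) ℚ :=
      fun i => pderiv i (MvPolynomial.map (Int.castRingHom ℚ) F) with hg
    have hcomp : ∀ i, pderiv i (MvPolynomial.map (Int.castRingHom K) F)
        = MvPolynomial.map (algebraMap ℚ K) (g i) := by
      intro i
      rw [hg]
      simp only
      rw [MvPolynomial.pderiv_map, MvPolynomial.pderiv_map, MvPolynomial.map_map]
      congr 1
    simp only [hcomp] at hD
    set S : Finset ((Fin n) →₀ ℕ) := Finset.univ.biUnion fun i => (g i).support with hS
    set A : Matrix S (Fin n) ℚ := Matrix.of fun d i => MvPolynomial.coeff d.1 (g i) with hA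
    have hSsub : ∀ i, (g i).support ⊆ S := fun i =>
      Finset.subset_biUnion_of_mem (fun j => (g j).support) (Finset.mem_univ i)
    have hAdef : ∀ (d : S) (i : Fin n), A d i = MvPolynomial.coeff d.1 (g i) := fun d i => rfl
    have hmat : (A.map (algebraMap ℚ K)).mulVec m = 0 :=
      (TransInvAux.combo_zero_iff (algebraMap ℚ K) g m S hSsub A hAdef).mp hD
    obtain ⟨v, hv, hAv⟩ := TransInvAux.matrix_descent A m hm hmat
    have hvsum : (∑ i, v i • g i) = 0 := by
      have h0 : (A.map (RingHom.id ℚ)).mulVec v = 0 := by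
        have : A.map (RingHom.id ℚ) = A := by
          ext d i
          simp [Matrix.map_apply]
        rw [this, hAv]
      have h1 := (TransInvAux.combo_zero_iff (RingHom.id ℚ) g v S hSsub A hAdef).mpr h0
      simpa [MvPolynomial.map_id] using h1
    obtain ⟨z, hz, c, hc, hzc⟩ := TransInvAux.clear_denominators v hv
    have hzsum : (∑ i, ((z i : ℚ)) • g i) = 0 := by
      have h2 : ∀ i ∈ Finset.univ, ((z i : ℚ)) • g i = c • (v i • g i) := by
        intro i _
        rw [hzc i, mul_smul]
      rw [Finset.sum_congr rfl h2, ← Finset.smul_sum, hvsum, smul_zero]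
    have hQ : (aeval fun i => X i + MvPolynomial.C ((z i : ℚ)))
        (MvPolynomial.map (Int.castRingHom ℚ) F) = MvPolynomial.map (Int.castRingHom ℚ) F :=
      (TransInvAux.key (fun i => (z i : ℚ)) _).mpr hzsum
    refine ⟨z, hz, ?_⟩
    apply MvPolynomial.map_injective (Int.castRingHom ℚ) Int.cast_injective
    rw [TransInvAux.map_trans]
    exact hQ
  · rintro ⟨z, hz, hinv⟩
    refine ⟨fun i => ((z i : ℤ) : K), ?_, ?_⟩
    · intro h0
      apply hz
      funext i
      have h5 : ((z i : ℤ) : K) = 0 := congrFun h0 i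
      exact_mod_cast h5
    · have h3 := TransInvAux.map_trans (Int.castRingHom K) z F
      rw [hinv] at h3
      have h4 : (fun i => MvPolynomial.X i + MvPolynomial.C ((Int.castRingHom K) (z i)))
          = fun i => MvPolynomial.X (R := K) i + MvPolynomial.C ((z i : ℤ) : K) := rfl
      rw [h4] at h3
      exact h3.symm
end

section
/- Let F ∈ ℤ[x₁,…,xₙ]. There exists a nonzero m ∈ ℤⁿ such that F(x+m) = F(x) if and only if there exists a matrix A ∈ GL(n,ℤ) such that the polynomial F(xA), obtained from F by the linear change of coordinates sending the row vector x = (x₁,…,xₙ) to xA (i.e. substituting x_i ↦ Σ_j x_j·A_{ji}), lies in ℤ[x₂,…,xₙ], i.e. does not involve the variable x₁. -/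
/-!
Write `m = d • v` with `v` a member of a basis of `ℤⁿ` (Smith normal form of `ℤ ∙ m`).
Invariance under `m` gives invariance under `v`: `t ↦ F(x + t v) - F(x)` is a polynomial in `t`
over `ℤ[x]` vanishing at every multiple of `d`, hence zero. Taking for `A` the matrix whose first
row is `v`, `G = F(xA)` satisfies `G(x + t e₁) = F(xA + t v) = G(x)` for all `t`, and substituting
`t = -x₁` shows that `G` does not involve `x₁`. Conversely, if `F(xA)` does not involve `x₁` it is
invariant under `e₁`, so `F` is invariant under the first row of `A`, which is nonzero as `A` is
invertible.
-/

open MvPolynomial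

theorem Module.Basis.exists_basis_eq_smul {R M ι : Type*} [CommRing R] [IsDomain R]
    [IsPrincipalIdealRing R] [AddCommGroup M] [Module R M] [Finite ι]
    (b : Basis ι R M) {m : M} (hm : m ≠ 0) (i : ι) :
    ∃ (b' : Basis ι R M) (d : R), m = d • b' i := by
  classical
  obtain ⟨k, bM, bN, f, a, snf⟩ := (Submodule.span R {m}).smithNormalForm b
  have hk : k = 1 := by
    have := b.isTorsionFree
    simpa [Module.finrank_eq_card_basis bN] using
      finrank_span_set_eq_card (R := R) (LinearIndepOn.singleton (v := id) hm)
  subst hk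
  have hm' : m = (bN.repr ⟨m, Submodule.mem_span_singleton_self m⟩ 0 * a 0) • bM (f 0) := by
    rw [mul_smul, ← snf 0]
    simpa using congrArg Subtype.val (bN.sum_repr ⟨m, Submodule.mem_span_singleton_self m⟩).symm
  exact ⟨bM.reindex (Equiv.swap (f 0) i), _, by simpa using hm'⟩

theorem Module.Basis.isUnit_det_of {R ι : Type*} [CommRing R] [Fintype ι] [DecidableEq ι]
    (b : Basis ι R (ι → R)) : IsUnit (Matrix.of b).det := by
  have hb : Matrix.of b = ((Pi.basisFun R ι).toMatrix b).transpose := by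
    ext i j
    simp [Module.Basis.toMatrix_apply]
  rw [hb, Matrix.det_transpose, ← Module.Basis.det_apply]
  exact (Pi.basisFun R ι).isUnit_det b

namespace MvPolynomial

variable {σ R : Type*} [CommRing R]

noncomputable def translate (m : σ → R) : MvPolynomial σ R →ₐ[R] MvPolynomial σ R :=
  aeval fun i => X i + C (m i)

theorem translate_zero (F : MvPolynomial σ R) : translate 0 F = F := by
  simp [translate]

theorem translate_add (a b : σ → R) (F : MvPolynomial σ R) :
    translate (a + b) F = translate a (translate b F) := by
  rw [translate, translate, translate, ← AlgHom.comp_apply, comp_aeval]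
  congr 2
  funext i
  simp [algebraMap_eq]
  ring

theorem translate_nsmul_eq_self {v : σ → R} {F : MvPolynomial σ R} (h : translate v F = F)
    (k : ℕ) : translate (k • v) F = F := by
  induction k with
  | zero => rw [zero_smul, translate_zero]
  | succ k ih => rw [succ_nsmul, translate_add, h, ih]

theorem translate_single_eq_self_of_notMem_vars [DecidableEq σ] {i : σ} {F : MvPolynomial σ R}
    (h : i ∉ F.vars) : translate (Pi.single i 1) F = F := by
  change (translate (Pi.single i 1)).toRingHom F = RingHom.id _ F
  refine hom_congr_vars ?_ (fun j hj _ => ?_) rfl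
  · ext1
    simp [translate]
  · have : j ≠ i := fun hji => h (hji ▸ hj)
    simp [translate, this]

noncomputable def alongLine (v : σ → R) : MvPolynomial σ R →ₐ[R] Polynomial (MvPolynomial σ R) :=
  aeval fun i => Polynomial.C (X i) + Polynomial.C (C (v i)) * Polynomial.X

theorem aeval_alongLine (v : σ → R) (c : MvPolynomial σ R) (F : MvPolynomial σ R) :
    Polynomial.aeval c (alongLine v F) = aeval (fun i => X i + C (v i) * c) F := by
  rw [alongLine, ← AlgHom.restrictScalars_apply R, ← AlgHom.comp_apply, comp_aeval]
  congr 2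
  funext i
  simp

theorem translate_smul_eq_aeval_alongLine (t : R) (v : σ → R) (F : MvPolynomial σ R) :
    translate (t • v) F = Polynomial.aeval (C t) (alongLine v F) := by
  rw [aeval_alongLine, translate]
  congr 2
  funext i
  simp [mul_comm]

theorem alongLine_eq_C_of_translate_smul_eq_self [CharZero R] [IsDomain R] {d : R} (hd : d ≠ 0)
    {v : σ → R} {F : MvPolynomial σ R} (h : translate (d • v) F = F) :
    alongLine v F = Polynomial.C F := by
  rw [← sub_eq_zero]
  refine Polynomial.eq_zero_of_infinite_isRoot _ (Set.infinite_of_injective_forall_mem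
    (f := fun k : ℕ => C ((k : R) * d)) ?_ fun k => ?_)
  · exact (C_injective σ R).comp ((mul_left_injective₀ hd).comp Nat.cast_injective)
  · rw [Set.mem_ofPred_eq, Polynomial.IsRoot.def, Polynomial.eval_sub, Polynomial.eval_C,
      ← Polynomial.coe_aeval_eq_eval, ← translate_smul_eq_aeval_alongLine, mul_smul,
      Nat.cast_smul_eq_nsmul, translate_nsmul_eq_self h, sub_self]

theorem translate_eq_self_of_smul [CharZero R] [IsDomain R] {d : R} (hd : d ≠ 0)
    {v : σ → R} {F : MvPolynomial σ R} (h : translate (d • v) F = F) : translate v F = F := by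
  have h1 := congrArg (Polynomial.aeval (C 1 : MvPolynomial σ R))
    (alongLine_eq_C_of_translate_smul_eq_self hd h)
  rwa [← translate_smul_eq_aeval_alongLine, one_smul, Polynomial.aeval_C,
    Algebra.algebraMap_self_apply] at h1

theorem notMem_vars_of_translate_single_eq_self [CharZero R] [IsDomain R] [DecidableEq σ]
    {i : σ} {F : MvPolynomial σ R} (h : translate (Pi.single i 1) F = F) : i ∉ F.vars := by
  have hF := congrArg (Polynomial.aeval (-X i : MvPolynomial σ R))
    (alongLine_eq_C_of_translate_smul_eq_self (v := Pi.single i 1) (F := F) one_ne_zero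
      (by rwa [one_smul]))
  rw [aeval_alongLine, Polynomial.aeval_C, Algebra.algebraMap_self_apply,
    aeval_eq_bind₁] at hF
  intro hi
  rw [← hF] at hi
  obtain ⟨j, -, hj⟩ := mem_vars_bind₁ _ _ hi
  by_cases hji : j = i
  · simp [hji] at hj
  · simp [hji, Ne.symm hji] at hj

theorem translate_single_eq_self_iff [CharZero R] [IsDomain R] [DecidableEq σ] {i : σ}
    {F : MvPolynomial σ R} : translate (Pi.single i 1) F = F ↔ i ∉ F.vars :=
  ⟨notMem_vars_of_translate_single_eq_self, translate_single_eq_self_of_notMem_vars⟩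

section LinearSubst

variable [Fintype σ]

noncomputable def linearSubst (A : Matrix σ σ R) : MvPolynomial σ R →ₐ[R] MvPolynomial σ R :=
  aeval fun i => ∑ j, C (A j i) * X j

theorem linearSubst_comp_linearSubst (A B : Matrix σ σ R) :
    (linearSubst B).comp (linearSubst A) = linearSubst (B * A) := by
  refine algHom_ext fun i => ?_
  simp only [linearSubst, AlgHom.comp_apply, aeval_X, map_sum, map_mul, aeval_C, algebraMap_eq,
    Matrix.mul_apply, Finset.mul_sum, Finset.sum_mul]
  rw [Finset.sum_comm]
  simp only [mul_comm, mul_left_comm]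

theorem linearSubst_one [DecidableEq σ] : linearSubst (1 : Matrix σ σ R) = AlgHom.id R _ := by
  ext i
  simp [linearSubst, Matrix.one_apply]

theorem linearSubst_injective [DecidableEq σ] {A : Matrix σ σ R} (hA : IsUnit A.det) :
    Function.Injective (linearSubst A) := by
  refine Function.LeftInverse.injective (g := linearSubst A⁻¹) fun F => ?_
  rw [← AlgHom.comp_apply, linearSubst_comp_linearSubst, Matrix.nonsing_inv_mul A hA,
    linearSubst_one, AlgHom.id_apply]

theorem translate_linearSubst (w : σ → R) (A : Matrix σ σ R) (F : MvPolynomial σ R) :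
    translate w (linearSubst A F) = linearSubst A (translate (Matrix.vecMul w A) F) := by
  simp only [← AlgHom.comp_apply]
  congr 1
  refine algHom_ext fun i => ?_
  simp [translate, linearSubst, Matrix.vecMul, dotProduct, mul_add, Finset.sum_add_distrib,
    mul_comm]

theorem translate_single_linearSubst_eq_self_iff [DecidableEq σ] {A : Matrix σ σ R}
    (hA : IsUnit A.det) (i : σ) (F : MvPolynomial σ R) :
    translate (Pi.single i 1) (linearSubst A F) = linearSubst A F ↔ translate (A i) F = F := by
  rw [translate_linearSubst, Matrix.single_one_vecMul, (linearSubst_injective hA).eq_iff]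
  rfl

end LinearSubst

end MvPolynomial

/-- **Translation invariance iff a variable can be eliminated.** An integer
polynomial `F ∈ ℤ[x₁,…,xₙ]` is invariant under some nontrivial integer
translation if and only if there is a matrix `A ∈ GL(n,ℤ)` (an integer matrix
with unit determinant) such that `F(xA)`, obtained by substituting
`x_i ↦ Σ_j x_j·A_{ji}`, does not involve the first variable. -/
theorem translation_invariant_iff_variable_eliminable (n : ℕ) (hn : 0 < n)
    (F : MvPolynomial (Fin n) ℤ) :
    (∃ m : Fin n → ℤ, m ≠ 0 ∧
        (aeval fun i => X i + MvPolynomial.C (m i)) F = F) ↔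
      (∃ A : Matrix (Fin n) (Fin n) ℤ, IsUnit A.det ∧
        (⟨0, hn⟩ : Fin n) ∉
          ((aeval fun i => ∑ j : Fin n, MvPolynomial.C (A j i) * X j) F).vars) := by
  set i₀ : Fin n := ⟨0, hn⟩
  change (∃ m, m ≠ 0 ∧ translate m F = F) ↔ ∃ A, IsUnit A.det ∧ i₀ ∉ (linearSubst A F).vars
  constructor
  · rintro ⟨m, hm, hF⟩
    obtain ⟨b, d, rfl⟩ := (Pi.basisFun ℤ (Fin n)).exists_basis_eq_smul hm i₀
    refine ⟨Matrix.of b, b.isUnit_det_of, ?_⟩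
    rw [← translate_single_eq_self_iff,
      translate_single_linearSubst_eq_self_iff b.isUnit_det_of]
    exact translate_eq_self_of_smul (left_ne_zero_of_smul hm) hF
  · rintro ⟨A, hA, hvars⟩
    rw [← translate_single_eq_self_iff, translate_single_linearSubst_eq_self_iff hA] at hvars
    exact ⟨A i₀, fun h => hA.ne_zero (Matrix.det_eq_zero_of_row_eq_zero i₀ (congrFun h)), hvars⟩
end

section
/- Let F ∈ ℤ[x₁,…,xₙ]. Suppose there are infinitely many prime numbers p such that the reduction F̄ of F modulo p (i.e. the image of F in 𝔽_p[x₁,…,xₙ]) is invariant under some nontrivial translation, meaning there exists a nonzero m ∈ 𝔽̄_pⁿ with F̄(x+m) = F̄(x) as polynomials over the algebraic closure 𝔽̄_p. Then there exists a nonzero m ∈ ℚ̄ⁿ (ℚ̄ an algebraic closure of ℚ) with F(x+m) = F(x) as polynomials over ℚ̄. -/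
/-!
The coefficients in `x` of `F(x + y) - F(x)` generate an ideal `I ⊆ ℤ[y]` whose zeros in `Kⁿ`,
for any ring `K`, are exactly the translations fixing `F` over `K`. If only `0` fixes `F` over
`ℚ̄`, the Nullstellensatz puts a power of each `yᵢ` into the ideal generated by `I` in `ℚ[y]`;
clearing denominators gives `dᵢ yᵢ ^ Nᵢ ∈ I` with `dᵢ ≠ 0`. Modulo a prime dividing none of the
`dᵢ` every translation fixing `F` is then `0`, and all but finitely many primes are of this kind.
-/

open MvPolynomial

namespace MvPolynomial

variable {σ R : Type*} [CommRing R]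

/-- `F(x + y) - F(x)`, with `x` the variables and `y` the variables of the coefficient ring. -/
noncomputable def translationDiff (F : MvPolynomial σ R) : MvPolynomial σ (MvPolynomial σ R) :=
  aeval (fun i => X i + C (X i)) F - map C F

noncomputable def translationIdeal (F : MvPolynomial σ R) : Ideal (MvPolynomial σ R) :=
  Ideal.span (Set.range fun d => coeff d (translationDiff F))

theorem map_eval₂Hom_translationDiff {K : Type*} [CommRing K] (f : R →+* K) (m : σ → K)
    (F : MvPolynomial σ R) :
    map (eval₂Hom f m) (translationDiff F) = aeval (fun i => X i + C (m i)) (map f F) - map f F := by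
  have hcomp : (map (eval₂Hom f m)).comp (aeval (R := R) fun i => X i + C (X i)).toRingHom =
      (aeval (R := K) fun i => X i + C (m i)).toRingHom.comp (map f) := by
    ext <;> simp
  rw [translationDiff, map_sub, map_map, eval₂Hom_comp_C]
  congr 1
  exact RingHom.congr_fun hcomp F

theorem aeval_translate_map_eq_self_iff {K : Type*} [CommRing K] (f : R →+* K) (m : σ → K)
    (F : MvPolynomial σ R) :
    aeval (fun i => X i + C (m i)) (map f F) = map f F ↔
      translationIdeal F ≤ RingHom.ker (eval₂Hom f m) := by
  rw [← sub_eq_zero, ← map_eval₂Hom_translationDiff, translationIdeal, Ideal.span_le,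
    Set.range_subset_iff, MvPolynomial.ext_iff]
  simp only [coeff_map, coeff_zero, SetLike.mem_coe, RingHom.mem_ker]

theorem mem_zeroLocus_map_iff {k K : Type*} [Field k] [Field K] [Algebra k K] (f : R →+* k)
    (I : Ideal (MvPolynomial σ R)) (x : σ → K) :
    x ∈ zeroLocus K (I.map (map f)) ↔ I ≤ RingHom.ker (eval₂Hom ((algebraMap k K).comp f) x) := by
  have hcomp : (aeval x : MvPolynomial σ k →ₐ[k] K).toRingHom.comp (map f) =
      eval₂Hom ((algebraMap k K).comp f) x := by
    ext <;> simp
  rw [mem_zeroLocus_iff, ← hcomp, ← RingHom.comap_ker, ← Ideal.map_le_iff_le_comap]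
  rfl

theorem exists_X_pow_mem_of_zeroLocus_subset_zero {k K : Type*} [Field k] [Field K] [Algebra k K]
    [IsAlgClosed K] [Finite σ] {I : Ideal (MvPolynomial σ k)} (h : zeroLocus K I ⊆ {0})
    (i : σ) : ∃ N : ℕ, X i ^ N ∈ I := by
  show X i ∈ I.radical
  rw [← vanishingIdeal_zeroLocus_eq_radical (K := K)]
  intro x hx
  simp [Set.mem_singleton_iff.mp (h hx)]

attribute [local instance] algebraMvPolynomial in
theorem exists_C_mul_mem_of_map_mem_map {S : Type*} [CommRing S] [Algebra R S] (M : Submonoid R)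
    [IsLocalization M S] {I : Ideal (MvPolynomial σ R)} {q : MvPolynomial σ R}
    (h : map (algebraMap R S) q ∈ I.map (map (algebraMap R S))) : ∃ a ∈ M, C a * q ∈ I := by
  obtain ⟨_, ⟨a, ha, rfl⟩, hmem⟩ :=
    (IsLocalization.algebraMap_mem_map_algebraMap_iff (M.map C) (MvPolynomial σ S) I q).mp h
  exact ⟨a, ha, hmem⟩

theorem eq_zero_of_C_mul_X_pow_mem {K : Type*} [CommRing K] [NoZeroDivisors K] (f : R →+* K)
    {m : σ → K} {I : Ideal (MvPolynomial σ R)} (hI : I ≤ RingHom.ker (eval₂Hom f m))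
    {a : R} (ha : f a ≠ 0) {i : σ} {N : ℕ} (hmem : C a * X i ^ N ∈ I) : m i = 0 := by
  have := hI hmem
  simp only [RingHom.mem_ker, map_mul, eval₂Hom_C, map_pow, eval₂Hom_X'] at this
  exact eq_zero_of_pow_eq_zero ((mul_eq_zero.mp this).resolve_left ha)

end MvPolynomial

/-- **From invariance mod infinitely many primes to invariance over `ℚ̄`.** If
`F ∈ ℤ[x₁,…,xₙ]` and for infinitely many primes `p` the reduction of `F` modulo
`p` is invariant under some nontrivial translation with entries in `𝔽̄_p`, then
`F` is invariant under some nontrivial translation with entries in an algebraic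
closure of `ℚ`. -/
theorem translation_invariance_from_reductions (n : ℕ) (F : MvPolynomial (Fin n) ℤ)
    (h : {p : ℕ | ∃ _ : Fact p.Prime,
        ∃ m : Fin n → AlgebraicClosure (ZMod p), m ≠ 0 ∧
          (aeval fun i => X i + MvPolynomial.C (m i))
              (MvPolynomial.map (Int.castRingHom (AlgebraicClosure (ZMod p))) F) =
            MvPolynomial.map (Int.castRingHom (AlgebraicClosure (ZMod p))) F}.Infinite) :
    ∃ m : Fin n → AlgebraicClosure ℚ, m ≠ 0 ∧
      (aeval fun i => X i + MvPolynomial.C (m i))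
          (MvPolynomial.map (Int.castRingHom (AlgebraicClosure ℚ)) F) =
        MvPolynomial.map (Int.castRingHom (AlgebraicClosure ℚ)) F := by
  by_contra! hQ
  have hzero : zeroLocus (AlgebraicClosure ℚ)
      ((translationIdeal F).map (map (algebraMap ℤ ℚ))) ⊆ {0} := by
    intro m hm
    by_contra hm0
    rw [mem_zeroLocus_map_iff, RingHom.ext_int ((algebraMap ℚ _).comp _) (Int.castRingHom _),
      ← aeval_translate_map_eq_self_iff] at hm
    exact hQ m hm0 hm
  have hrel (i : Fin n) : ∃ d : ℤ, d ≠ 0 ∧ ∃ N : ℕ, C d * X i ^ N ∈ translationIdeal F := by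
    obtain ⟨N, hN⟩ := exists_X_pow_mem_of_zeroLocus_subset_zero hzero i
    obtain ⟨d, hd, hmem⟩ := exists_C_mul_mem_of_map_mem_map (S := ℚ) (nonZeroDivisors ℤ)
      (q := X i ^ N) (by simpa using hN)
    exact ⟨d, nonZeroDivisors.ne_zero hd, N, hmem⟩
  choose d hd N hN using hrel
  obtain ⟨p, ⟨_, m, hm0, hm⟩, hp⟩ := h.exists_gt (∏ i, d i).natAbs
  have hD : ((∏ i, d i : ℤ) : AlgebraicClosure (ZMod p)) ≠ 0 := by
    rw [Ne, CharP.intCast_eq_zero_iff _ p]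
    exact fun hdvd => Finset.prod_ne_zero_iff.mpr (fun i _ => hd i)
      (Int.eq_zero_of_dvd_of_natAbs_lt_natAbs hdvd hp)
  push_cast at hD
  refine hm0 (funext fun i => ?_)
  exact eq_zero_of_C_mul_X_pow_mem _ ((aeval_translate_map_eq_self_iff _ _ _).mp hm)
    (Finset.prod_ne_zero_iff.mp hD i (Finset.mem_univ i)) (hN i)
end

section
/- Let d ≥ 1 and let F ∈ ℤ[x₁,…,xₙ] be a nonzero polynomial that is d-th-power-free, i.e. there is no nonconstant g ∈ ℤ[x₁,…,xₙ] with g^d ∣ F. Then for all but finitely many prime numbers p, the reduction of F modulo p is d-th-power-free in 𝔽_p[x₁,…,xₙ], i.e. there is no nonconstant g ∈ 𝔽_p[x₁,…,xₙ] with g^d dividing the image of F in 𝔽_p[x₁,…,xₙ]. -/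
/-!
View `F` as a polynomial in one variable `xᵢ` over `R = ℤ[other variables]`. By Gauss's lemma
`F` stays `d`-th-power-free over `Frac R`, and in characteristic zero this forces
`F, ∂F, …, ∂^(d-1)F` (derivatives in `xᵢ`) to generate the unit ideal: a prime dividing all of
them divides `F` to order at least `d`. Clearing denominators yields `cᵢ ≠ 0` in `R` lying in the
ideal they generate in `R[xᵢ]`. Only finitely many primes kill some `cᵢ`; for any other `p`, a
nonconstant `g` with `g^d ∣ F mod p` involves some `xᵢ` and divides every `∂^j F mod p` with
`j < d`, hence divides `cᵢ mod p ≠ 0`, which is constant in `xᵢ`.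
-/

open Polynomial
open scoped nonZeroDivisors

namespace Polynomial

section CommRing

variable {R S : Type*} [CommRing R] [CommRing S]

noncomputable def iterateDerivativeIdeal (d : ℕ) (f : R[X]) : Ideal R[X] :=
  Ideal.span (Set.range fun j : Fin d => derivative^[j] f)

theorem dvd_of_mem_iterateDerivativeIdeal {d : ℕ} {f g a : R[X]} (hg : g ^ d ∣ f)
    (ha : a ∈ iterateDerivativeIdeal d f) : g ∣ a := by
  refine Ideal.mem_span_singleton.1 (Ideal.span_le.2 ?_ ha)
  rintro _ ⟨j, rfl⟩
  exact Ideal.mem_span_singleton.2 <| (dvd_pow_self g (Nat.sub_ne_zero_of_lt j.isLt)).trans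
    (pow_sub_dvd_iterate_derivative_of_pow_dvd j hg)

theorem map_iterateDerivativeIdeal (φ : R →+* S) (d : ℕ) (f : R[X]) :
    (iterateDerivativeIdeal d f).map (mapRingHom φ) = iterateDerivativeIdeal d (f.map φ) := by
  simp only [iterateDerivativeIdeal, Ideal.map_span, ← Set.range_comp, Function.comp_def,
    coe_mapRingHom, iterate_derivative_map]

end CommRing

section Field

variable {K : Type*} [Field K] [CharZero K]

theorem not_dvd_iterate_derivative_pow_mul {π u : K[X]} (hπ : Prime π) (hu : ¬π ∣ u) (e : ℕ) :
    ¬π ∣ derivative^[e] (π ^ e * u) := by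
  induction e generalizing u with
  | zero => simpa using hu
  | succ e ih =>
    have key : derivative (π ^ (e + 1) * u) =
        π ^ e * (C ((e + 1 : ℕ) : K) * derivative π * u + π * derivative u) := by
      rw [derivative_mul, derivative_pow, Nat.add_sub_cancel]; ring
    rw [Function.iterate_succ_apply, key]
    have hunit : IsUnit (C ((e + 1 : ℕ) : K)) :=
      isUnit_C.2 (isUnit_iff_ne_zero.2 (Nat.cast_ne_zero.2 e.succ_ne_zero))
    have hπ' : ¬π ∣ derivative π := fun h =>
      hπ.not_isUnit (hπ.irreducible.separable.isUnit_of_dvd h)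
    have hndvd : ¬π ∣ C ((e + 1 : ℕ) : K) * derivative π * u := by
      simp only [hπ.dvd_mul, not_or]
      exact ⟨⟨fun h => hπ.not_isUnit (isUnit_of_dvd_unit h hunit), hπ'⟩, hu⟩
    exact ih fun h => hndvd ((dvd_add_left (dvd_mul_right π _)).1 h)

theorem pow_dvd_of_forall_dvd_iterate_derivative {π f : K[X]} (hπ : Prime π) {d : ℕ}
    (h : ∀ j < d, π ∣ derivative^[j] f) : π ^ d ∣ f := by
  rcases eq_or_ne f 0 with rfl | hf
  · exact dvd_zero _
  obtain ⟨u, hfu, hu⟩ :=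
    (FiniteMultiplicity.of_not_isUnit hπ.not_isUnit hf).exists_eq_pow_mul_and_not_dvd
  set e := multiplicity π f
  by_cases hd : d ≤ e
  · exact hfu ▸ (pow_dvd_pow π hd).mul_right u
  · have hdvd := h e (not_le.1 hd)
    rw [hfu] at hdvd
    exact (not_dvd_iterate_derivative_pow_mul hπ hu e hdvd).elim

theorem iterateDerivativeIdeal_eq_top {d : ℕ} {f : K[X]}
    (hf : ∀ q : K[X], 0 < q.natDegree → ¬q ^ d ∣ f) : iterateDerivativeIdeal d f = ⊤ := by
  by_contra hne
  obtain ⟨M, hM, hle⟩ := Ideal.exists_le_maximal _ hne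
  have hπ := Submodule.IsPrincipal.prime_generator_of_isPrime M
    (Ideal.bot_lt_of_maximal M (not_isField K)).ne'
  refine hf _ hπ.irreducible.natDegree_pos
    (pow_dvd_of_forall_dvd_iterate_derivative hπ fun j hj => ?_)
  exact (Submodule.IsPrincipal.mem_iff_generator_dvd M).1
    (hle (Ideal.subset_span ⟨⟨j, hj⟩, rfl⟩))

end Field

theorem IsPrimitive.pow {R : Type*} [CommRing R] [IsDomain R] [NormalizedGCDMonoid R]
    {q : R[X]} (hq : q.IsPrimitive) (d : ℕ) : (q ^ d).IsPrimitive := by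
  induction d with
  | zero => simp
  | succ d ih => simpa [pow_succ] using ih.mul hq

section FractionRing

open IsLocalization

variable {R K : Type*} [CommRing R] [IsDomain R] [Field K] [Algebra R K] [IsFractionRing R K]

theorem exists_isPrimitive_map_associated [NormalizedGCDMonoid R] {Q : K[X]} (hQ : Q ≠ 0) :
    ∃ q : R[X], q.IsPrimitive ∧ Associated (q.map (algebraMap R K)) Q := by
  set q₀ := integerNormalization R⁰ Q
  obtain ⟨b, hb, hq₀⟩ := integerNormalization_spec R⁰ Q
  have hq₀0 : q₀ ≠ 0 := IsFractionRing.integerNormalization_eq_zero_iff.not.2 hQ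
  have hunit {r : R} (hr : r ≠ 0) : IsUnit (C (algebraMap R K r)) :=
    isUnit_C.2 (isUnit_iff_ne_zero.2 ((map_ne_zero_iff _ (IsFractionRing.injective R K)).2 hr))
  refine ⟨q₀.primPart, q₀.isPrimitive_primPart, ?_⟩
  have h : C (algebraMap R K q₀.content) * q₀.primPart.map (algebraMap R K) =
      C (algebraMap R K b) * Q := by
    rw [← map_C, ← Polynomial.map_mul, ← q₀.eq_C_content_mul_primPart, hq₀, Algebra.smul_def]
    rfl
  exact ((associated_unit_mul_left _ _ (hunit (content_eq_zero_iff.not.2 hq₀0))).symm.trans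
    (Associated.of_eq h)).trans (associated_unit_mul_left _ _ (hunit (nonZeroDivisors.ne_zero hb)))

theorem not_pow_dvd_map_of_not_pow_dvd [NormalizedGCDMonoid R] {d : ℕ} {f : R[X]}
    (hf : ∀ q : R[X], 0 < q.natDegree → ¬q ^ d ∣ f) (Q : K[X]) (hQ : 0 < Q.natDegree) :
    ¬Q ^ d ∣ f.map (algebraMap R K) := by
  intro hdvd
  obtain ⟨q, hq, hqQ⟩ := exists_isPrimitive_map_associated (R := R) (ne_zero_of_natDegree_gt hQ)
  refine hf q ?_ ((hq.pow d).dvd_of_fraction_map_dvd_fraction_map (K := K) ?_)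
  · rwa [← natDegree_map_eq_of_injective (IsFractionRing.injective R K),
      natDegree_eq_of_degree_eq (degree_eq_degree_of_associated hqQ)]
  · rw [Polynomial.map_pow]; exact (hqQ.pow_pow).dvd_iff_dvd_left.2 hdvd

end FractionRing

attribute [local instance] Polynomial.algebra Polynomial.isLocalization in
theorem exists_C_mem_of_map_eq_top {R S : Type*} [CommRing R] [CommRing S] [Algebra R S]
    (M : Submonoid R) [IsLocalization M S] {I : Ideal R[X]}
    (hI : I.map (mapRingHom (algebraMap R S)) = ⊤) : ∃ c ∈ M, C c ∈ I := by
  obtain ⟨_, ⟨c, hc, rfl⟩, hcI⟩ := Set.not_disjoint_iff.1 fun h =>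
    (IsLocalization.map_algebraMap_ne_top_iff_disjoint (M.map C) S[X] I).2 h hI
  exact ⟨c, hc, hcI⟩

theorem exists_C_mem_iterateDerivativeIdeal {R : Type*} [CommRing R] [IsDomain R]
    [NormalizedGCDMonoid R] [CharZero R] {d : ℕ} {f : R[X]}
    (hf : ∀ q : R[X], 0 < q.natDegree → ¬q ^ d ∣ f) :
    ∃ c : R, c ≠ 0 ∧ C c ∈ iterateDerivativeIdeal d f := by
  let K := FractionRing R
  have : CharZero K := charZero_of_injective_algebraMap (IsFractionRing.injective R K)
  obtain ⟨c, hc, hcI⟩ := exists_C_mem_of_map_eq_top R⁰ (S := K) <| by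
    rw [map_iterateDerivativeIdeal]
    exact iterateDerivativeIdeal_eq_top (not_pow_dvd_map_of_not_pow_dvd hf)
  exact ⟨c, nonZeroDivisors.ne_zero hc, hcI⟩

end Polynomial

theorem Int.finite_setOf_intCast_eq_zero {a : ℤ} (ha : a ≠ 0) :
    {p : ℕ | (a : ZMod p) = 0}.Finite :=
  (Nat.divisors a.natAbs).finite_toSet.subset fun p hp => Nat.mem_divisors.2
    ⟨Int.natCast_dvd.1 ((ZMod.intCast_zmod_eq_zero_iff_dvd a p).1 hp), Int.natAbs_ne_zero.2 ha⟩

namespace MvPolynomial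

open Polynomial (iterateDerivativeIdeal)

variable {R S σ : Type*} [CommRing R] [CommRing S]

theorem exists_degreeOf_pos_of_totalDegree_pos {g : MvPolynomial σ R} (hg : 0 < g.totalDegree) :
    ∃ i, 0 < g.degreeOf i := by
  obtain ⟨i, hi⟩ : g.vars.Nonempty := Finset.nonempty_iff_ne_empty.2 fun h =>
    hg.ne' (totalDegree_eq_zero_iff_eq_C.2 (vars_eq_empty_iff_eq_C.1 h))
  exact ⟨i, Nat.pos_of_ne_zero (mem_vars_iff_degreeOf_ne_zero.1 hi)⟩

theorem finite_setOf_map_intCast_eq_zero {c : MvPolynomial σ ℤ} (hc : c ≠ 0) :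
    {p : ℕ | map (Int.castRingHom (ZMod p)) c = 0}.Finite := by
  obtain ⟨t, ht⟩ := ne_zero_iff.1 hc
  refine (Int.finite_setOf_intCast_eq_zero ht).subset fun p hp => ?_
  simpa [coeff_map] using congrArg (coeff t) hp

noncomputable def toPolynomialIn [DecidableEq σ] (i : σ) :
    MvPolynomial σ R ≃ₐ[R] Polynomial (MvPolynomial {j // j ≠ i} R) :=
  (renameEquiv R (Equiv.optionSubtypeNe i).symm).trans (optionEquivLeft R _)

theorem natDegree_toPolynomialIn [DecidableEq σ] (i : σ) (g : MvPolynomial σ R) :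
    (toPolynomialIn i g).natDegree = g.degreeOf i := by
  rw [toPolynomialIn, AlgEquiv.trans_apply, natDegree_optionEquivLeft, renameEquiv_apply,
    ← Equiv.optionSubtypeNe_symm_self i, degreeOf_rename_of_injective (Equiv.injective _)]

theorem toPolynomialIn_map [DecidableEq σ] (i : σ) (φ : R →+* S) (g : MvPolynomial σ R) :
    toPolynomialIn i (map φ g) = (toPolynomialIn i g).map (map φ) := by
  induction g using MvPolynomial.induction_on with
  | C a => simp [toPolynomialIn, optionEquivLeft_C]
  | add p q hp hq => simp [hp, hq]
  | mul_X p j hp =>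
    rw [map_mul, map_X, map_mul, hp, map_mul, Polynomial.map_mul]
    congr 1
    by_cases h : j = i <;> simp [toPolynomialIn, h, optionEquivLeft_X_none, optionEquivLeft_X_some]

theorem exists_C_mem_iterateDerivativeIdeal_toPolynomialIn [DecidableEq σ] [IsDomain R]
    [UniqueFactorizationMonoid R] [CharZero R] {d : ℕ} {F : MvPolynomial σ R} (i : σ)
    (hF : ∀ g : MvPolynomial σ R, 0 < g.degreeOf i → ¬g ^ d ∣ F) :
    ∃ c, c ≠ 0 ∧ Polynomial.C c ∈ iterateDerivativeIdeal d (toPolynomialIn i F) := by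
  have := Classical.arbitrary (NormalizedGCDMonoid (MvPolynomial {j // j ≠ i} R))
  refine Polynomial.exists_C_mem_iterateDerivativeIdeal fun q hq hdvd =>
    hF ((toPolynomialIn i).symm q) ?_ ?_
  · rwa [← natDegree_toPolynomialIn, AlgEquiv.apply_symm_apply]
  · simpa using map_dvd (toPolynomialIn i).symm hdvd

theorem degreeOf_eq_zero_of_pow_dvd_map [DecidableEq σ] [IsDomain S] (φ : R →+* S) {d : ℕ}
    {F : MvPolynomial σ R} {i : σ} {c : MvPolynomial {j // j ≠ i} R}
    (hc : Polynomial.C c ∈ iterateDerivativeIdeal d (toPolynomialIn i F)) (hφc : map φ c ≠ 0)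
    {g : MvPolynomial σ S} (hg : g ^ d ∣ map φ F) : g.degreeOf i = 0 := by
  have hmem : Polynomial.C (map φ c) ∈ iterateDerivativeIdeal d (toPolynomialIn i (map φ F)) := by
    rw [toPolynomialIn_map, ← Polynomial.map_iterateDerivativeIdeal]
    simpa using Ideal.mem_map_of_mem (Polynomial.mapRingHom (map φ)) hc
  have hdvd := Polynomial.dvd_of_mem_iterateDerivativeIdeal
    (by simpa using map_dvd (toPolynomialIn i) hg) hmem
  simpa [natDegree_toPolynomialIn] using Polynomial.natDegree_le_of_dvd hdvd
    (Polynomial.C_ne_zero.2 hφc)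

end MvPolynomial

open MvPolynomial

theorem power_free_reduction_general (n d : ℕ)
    (F : MvPolynomial (Fin n) ℤ)
    (hpf : ¬ ∃ g : MvPolynomial (Fin n) ℤ, 0 < g.totalDegree ∧ g ^ d ∣ F) :
    {p : ℕ | p.Prime ∧ ∃ g : MvPolynomial (Fin n) (ZMod p), 0 < g.totalDegree ∧
        g ^ d ∣ MvPolynomial.map (Int.castRingHom (ZMod p)) F}.Finite := by
  have hcert (i : Fin n) := exists_C_mem_iterateDerivativeIdeal_toPolynomialIn i
    fun g hg hdvd => hpf ⟨g, hg.trans_le (degreeOf_le_totalDegree g i), hdvd⟩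
  choose c hc0 hc using hcert
  refine (Set.finite_iUnion fun i => finite_setOf_map_intCast_eq_zero (hc0 i)).subset ?_
  rintro p ⟨hp, g, hg, hdvd⟩
  have := Fact.mk hp
  obtain ⟨i, hi⟩ := exists_degreeOf_pos_of_totalDegree_pos hg
  exact Set.mem_iUnion.2
    ⟨i, by_contra fun h => hi.ne' (degreeOf_eq_zero_of_pow_dvd_map _ (hc i) h hdvd)⟩

/-- **Power-freeness is preserved by reduction mod almost all primes.** If
`F ∈ ℤ[x₁,…,xₙ]` is nonzero and `d`-th-power-free (no nonconstant `g` satisfies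
`g^d ∣ F`), then for all but finitely many primes `p` the reduction of `F`
modulo `p` is `d`-th-power-free in `𝔽_p[x₁,…,xₙ]`. -/
theorem power_free_reduction (n d : ℕ) (hd : 1 ≤ d)
    (F : MvPolynomial (Fin n) ℤ) (hF : F ≠ 0)
    (hpf : ¬ ∃ g : MvPolynomial (Fin n) ℤ, 0 < g.totalDegree ∧ g ^ d ∣ F) :
    {p : ℕ | p.Prime ∧ ∃ g : MvPolynomial (Fin n) (ZMod p), 0 < g.totalDegree ∧
        g ^ d ∣ MvPolynomial.map (Int.castRingHom (ZMod p)) F}.Finite :=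
  power_free_reduction_general n d F hpf
end
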